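/- Let N ≡ 1 (mod p) be primes with p ≥ 5, ν = v_p(N-1), log : (Z/NZ)^× → Z/p^ν Z surjective, and X = {N - kp : 1 ≤ k ≤ N-1}. Then ∑_{x∈X} x·log(x) ≡ 0 (mod p^ν) and ∑_{x∈X} log(x) ≡ 0 (mod p^ν). -/

import Mathlib

open Classical in
/-- The discrete logarithm attached to a homomorphism
`log : (Z/NZ)ˣ → Z/MZ`, extended by `0` to non-units of `Z/NZ`. -/
noncomputable def dlog {N M : ℕ} (log : (ZMod N)ˣ →* Multiplicative (ZMod M))
    (x : ZMod N) : ZMod M :=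
  if h : IsUnit x then Multiplicative.toAdd (log h.unit) else 0

/-!
Modulo `N` the number `N - kp` is `-p·k`, and modulo `p^ν` it is `1 - kp`, because `p^ν ∣ N - 1`.
As `p^ν` is odd, `log (-1) = 0`, so `log` is even; with `log x⁻¹ = -log x` this gives
`∑ log x = 0` over `ZMod N` (extending `log` by `0` at `0` costs nothing), and reflecting
`x ↦ -x`, which sends the representative `k` to `N - k ≡ 1 - k`, gives `∑ k log k = 0`.
Since also `∑ k = N(N-1)/2 ≡ 0`, both sums vanish after the substitution `k ↦ -p·k`.
-/

open Finset

lemma ZMod.sum_val_eq_sum_range {A : Type*} [AddCommMonoid A] (N : ℕ) [NeZero N] (f : ℕ → A) :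
    ∑ x : ZMod N, f x.val = ∑ i ∈ range N, f i := by
  obtain ⟨n, rfl⟩ := Nat.exists_eq_succ_of_ne_zero (NeZero.ne N)
  exact Fin.sum_univ_eq_sum_range f (n + 1)

lemma ZMod.sum_Icc_eq_sum_val {A : Type*} [AddCommMonoid A] (N : ℕ) [NeZero N] (f : ℕ → A)
    (hf : f 0 = 0) : ∑ k ∈ Icc 1 (N - 1), f k = ∑ x : ZMod N, f x.val := by
  rw [ZMod.sum_val_eq_sum_range]
  refine sum_subset (fun k hk => ?_) (fun k hk hk' => ?_)
  · simp only [mem_Icc, mem_range] at hk ⊢; omega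
  · obtain rfl : k = 0 := by simp only [mem_Icc, mem_range] at hk hk'; omega
    exact hf

lemma ZMod.sum_val_eq_zero {N M : ℕ} [NeZero N] (hNM : (N : ZMod M) = 1) (hM : Odd M) :
    ∑ x : ZMod N, (x.val : ZMod M) = 0 := by
  refine (ZMod.add_self_eq_zero_iff_eq_zero hM).mp ?_
  have hgauss := congrArg (Nat.cast : ℕ → ZMod M) (sum_range_id_mul_two N)
  push_cast [Nat.cast_sub (NeZero.one_le : 1 ≤ N), hNM] at hgauss
  rw [← mul_two, ZMod.sum_val_eq_sum_range N (fun i => (i : ZMod M)), hgauss, sub_self, mul_zero]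

section DiscreteLog

variable {N M : ℕ} (log : (ZMod N)ˣ →* Multiplicative (ZMod M))

lemma dlog_of_not_isUnit {x : ZMod N} (h : ¬IsUnit x) : dlog log x = 0 := dif_neg h

lemma dlog_coe_unit (u : (ZMod N)ˣ) : dlog log u = (log u).toAdd := by
  rw [dlog, dif_pos u.isUnit, u.isUnit.unit_of_val_units]

lemma dlog_one : dlog log 1 = 0 := by
  simpa using dlog_coe_unit log 1

lemma dlog_mul {x y : ZMod N} (hx : IsUnit x) (hy : IsUnit y) :
    dlog log (x * y) = dlog log x + dlog log y := by
  obtain ⟨u, rfl⟩ := hx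
  obtain ⟨v, rfl⟩ := hy
  rw [← Units.val_mul, dlog_coe_unit, dlog_coe_unit, dlog_coe_unit, map_mul, toAdd_mul]

lemma dlog_neg_one (hM : Odd M) : dlog log (-1) = 0 :=
  (ZMod.add_self_eq_zero_iff_eq_zero hM).mp <| by
    rw [← dlog_mul log isUnit_one.neg isUnit_one.neg, neg_mul_neg, one_mul, dlog_one]

lemma dlog_neg (hM : Odd M) (x : ZMod N) : dlog log (-x) = dlog log x := by
  by_cases hx : IsUnit x
  · rw [neg_eq_neg_one_mul, dlog_mul log isUnit_one.neg hx, dlog_neg_one log hM, zero_add]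
  · rw [dlog_of_not_isUnit log hx, dlog_of_not_isUnit log (by rwa [IsUnit.neg_iff])]

variable [Fact N.Prime]

lemma dlog_zero : dlog log 0 = 0 := dlog_of_not_isUnit log not_isUnit_zero

lemma dlog_inv (x : ZMod N) : dlog log x⁻¹ = -dlog log x := by
  rcases eq_or_ne x 0 with rfl | hx
  · rw [inv_zero, dlog_zero, neg_zero]
  · obtain ⟨u, rfl⟩ := hx.isUnit
    rw [← Units.val_inv_eq_inv_val, dlog_coe_unit, dlog_coe_unit, map_inv, toAdd_inv]

lemma sum_dlog_eq_zero (hM : Odd M) : ∑ x : ZMod N, dlog log x = 0 := by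
  refine (ZMod.add_self_eq_zero_iff_eq_zero hM).mp ?_
  have h := Fintype.sum_equiv (Equiv.inv (ZMod N)) (fun x => dlog log x⁻¹) (dlog log)
    (fun _ => rfl)
  simp only [dlog_inv, sum_neg_distrib] at h
  linear_combination -h

lemma sum_dlog_mul_left_eq_zero (hM : Odd M) (c : ZMod N) :
    ∑ x : ZMod N, dlog log (c * x) = 0 := by
  rcases eq_or_ne c 0 with rfl | hc
  · simp only [zero_mul, dlog_zero, sum_const_zero]
  · exact (Fintype.sum_equiv (Equiv.mulLeft₀ c hc) _ (dlog log) fun _ => rfl).trans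
      (sum_dlog_eq_zero log hM)

lemma sum_val_mul_dlog_eq_zero (hNM : (N : ZMod M) = 1) (hM : Odd M) :
    ∑ x : ZMod N, (x.val : ZMod M) * dlog log x = 0 := by
  have hreflect (x : ZMod N) :
      ((-x).val : ZMod M) * dlog log (-x) = dlog log x - (x.val : ZMod M) * dlog log x := by
    rcases eq_or_ne x 0 with rfl | hx
    · simp only [neg_zero, dlog_zero, mul_zero, sub_zero]
    · have : NeZero x := ⟨hx⟩
      rw [ZMod.val_neg_of_ne_zero, Nat.cast_sub x.val_lt.le, hNM, dlog_neg log hM]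
      ring
  refine (ZMod.add_self_eq_zero_iff_eq_zero hM).mp ?_
  have h := Fintype.sum_equiv (Equiv.neg (ZMod N)) _
    (fun x => (x.val : ZMod M) * dlog log x) fun x => (hreflect x).symm
  rw [sum_sub_distrib, sum_dlog_eq_zero log hM, zero_sub] at h
  linear_combination -h

lemma sum_val_mul_dlog_mul_left_eq_zero (hNM : (N : ZMod M) = 1) (hM : Odd M)
    {c : ZMod N} (hc : c ≠ 0) : ∑ x : ZMod N, (x.val : ZMod M) * dlog log (c * x) = 0 := by
  have hsplit (x : ZMod N) : (x.val : ZMod M) * dlog log (c * x)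
      = dlog log c * x.val + x.val * dlog log x := by
    rcases eq_or_ne x 0 with rfl | hx
    · simp only [ZMod.val_zero, Nat.cast_zero, mul_zero, zero_mul, add_zero]
    · rw [dlog_mul log hc.isUnit hx.isUnit]
      ring
  rw [sum_congr rfl fun x _ => hsplit x, sum_add_distrib, ← mul_sum, ZMod.sum_val_eq_zero hNM hM,
    sum_val_mul_dlog_eq_zero log hNM hM, mul_zero, add_zero]

end DiscreteLog

theorem sum_log_over_X_eq_zero_general (N p ν : ℕ) (hN : N.Prime) (hp : p.Prime)
    (hp5 : 5 ≤ p) (hdvd : p ∣ N - 1)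
    (hν : ν = (N - 1).factorization p)
    (log : (ZMod N)ˣ →* Multiplicative (ZMod (p ^ ν))) :
    (∑ k ∈ Finset.Icc 1 (N - 1),
        ((((N : ℤ) - (k : ℤ) * p) : ℤ) : ZMod (p ^ ν))
          * dlog log ((((N : ℤ) - (k : ℤ) * p) : ℤ) : ZMod N) = 0)
    ∧ (∑ k ∈ Finset.Icc 1 (N - 1),
        dlog log ((((N : ℤ) - (k : ℤ) * p) : ℤ) : ZMod N) = 0) := by
  have : Fact N.Prime := ⟨hN⟩
  have hNM : (N : ZMod (p ^ ν)) = 1 := by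
    have hpν : p ^ ν ∣ N - 1 := hν ▸ Nat.ordProj_dvd (N - 1) p
    exact_mod_cast ((ZMod.natCast_eq_natCast_iff _ _ _).mpr
      ((Nat.modEq_iff_dvd' hN.one_le).mpr hpν)).symm
  have hM : Odd (p ^ ν) := (hp.odd_of_ne_two (by omega)).pow
  have hp0 : -(p : ZMod N) ≠ 0 := by
    have hpN : p ≤ N - 1 := Nat.le_of_dvd (by have := hN.two_le; omega) hdvd
    rw [neg_ne_zero, Ne, ZMod.natCast_eq_zero_iff]
    exact Nat.not_dvd_of_pos_of_lt hp.pos (by omega)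
  have hmodN (x : ZMod N) : (((N : ℤ) - (x.val : ℤ) * p : ℤ) : ZMod N) = -p * x := by
    push_cast [ZMod.natCast_self, ZMod.natCast_zmod_val]
    ring
  have hmodM (x : ZMod N) (d : ZMod (p ^ ν)) :
      (((N : ℤ) - (x.val : ℤ) * p : ℤ) : ZMod (p ^ ν)) * d = d - p * (x.val * d) := by
    push_cast [hNM]
    ring
  constructor
  · refine (ZMod.sum_Icc_eq_sum_val N _ (by simp [dlog_zero])).trans ?_
    simp only [hmodN, hmodM]
    rw [sum_sub_distrib, ← mul_sum, sum_dlog_mul_left_eq_zero log hM,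
      sum_val_mul_dlog_mul_left_eq_zero log hNM hM hp0, mul_zero, sub_zero]
  · refine (ZMod.sum_Icc_eq_sum_val N _ (by simp [dlog_zero])).trans ?_
    simp only [hmodN]
    exact sum_dlog_mul_left_eq_zero log hM _

/-- Let `N ≡ 1 (mod p)` be primes with `p ≥ 5`, `ν = v_p(N-1)`,
`log : (Z/NZ)ˣ → Z/p^ν Z` surjective, and `X = {N - kp : 1 ≤ k ≤ N-1}`. Then
`∑_{x∈X} x·log(x) ≡ 0 (mod p^ν)` and `∑_{x∈X} log(x) ≡ 0 (mod p^ν)`. -/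
theorem sum_log_over_X_eq_zero (N p ν : ℕ) (hN : N.Prime) (hp : p.Prime)
    (hN5 : 5 ≤ N) (hp5 : 5 ≤ p) (hdvd : p ∣ N - 1)
    (hν : ν = (N - 1).factorization p)
    (log : (ZMod N)ˣ →* Multiplicative (ZMod (p ^ ν)))
    (hlog : Function.Surjective log) :
    (∑ k ∈ Finset.Icc 1 (N - 1),
        ((((N : ℤ) - (k : ℤ) * p) : ℤ) : ZMod (p ^ ν))
          * dlog log ((((N : ℤ) - (k : ℤ) * p) : ℤ) : ZMod N) = 0)
    ∧ (∑ k ∈ Finset.Icc 1 (N - 1),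
        dlog log ((((N : ℤ) - (k : ℤ) * p) : ℤ) : ZMod N) = 0) :=
  sum_log_over_X_eq_zero_general N p ν hN hp hp5 hdvd hν log
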